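/- arXiv:2005.05809 — 7 statements merged into one kernel-verified Lean document; each statement's English description precedes it below -/
import Mathlib

section
/- Let (B,·,∘) be a skew left brace, and define x ·' y := y · x. Then (B,·',∘) is also a skew left brace (the opposite brace). -/
theorem opposite_brace_general {B : Type*} [Group B]
    (circ : B → B → B)
    (hbrace : ∀ x y z : B, circ x (y * z) = circ x y * x⁻¹ * circ x z)
    (dot' : B → B → B) (hdot' : ∀ x y : B, dot' x y = y * x) :
    ∀ x y z : B, circ x (dot' y z) = dot' (dot' (circ x y) x⁻¹) (circ x z) := by
  intro x y z
  rw [hdot', hbrace, hdot', hdot', mul_assoc]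

/-- Let `(B, ·, ∘)` be a skew left brace and define `x ·' y := y · x`. Then `(B, ·', ∘)`
is also a skew left brace (the opposite brace): the brace relation holds for `·'`,
namely `x ∘ (y ·' z) = ((x ∘ y) ·' x⁻¹) ·' (x ∘ z)`, where the inverse of `x` in
`(B, ·')` coincides with its inverse `x⁻¹` in `(B, ·)`. -/
theorem opposite_brace {B : Type*} [Group B]
    (circ : B → B → B) (e : B) (cinv : B → B)
    (hassoc : ∀ x y z : B, circ (circ x y) z = circ x (circ y z))
    (he_left : ∀ x : B, circ e x = x) (he_right : ∀ x : B, circ x e = x)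
    (hinv_left : ∀ x : B, circ (cinv x) x = e)
    (hinv_right : ∀ x : B, circ x (cinv x) = e)
    (hbrace : ∀ x y z : B, circ x (y * z) = circ x y * x⁻¹ * circ x z)
    (dot' : B → B → B) (hdot' : ∀ x y : B, dot' x y = y * x) :
    ∀ x y z : B, circ x (dot' y z) = dot' (dot' (circ x y) x⁻¹) (circ x z) :=
  opposite_brace_general circ hbrace dot' hdot'
end

section
/- Let (B,·,∘) be a skew left brace, and define x ∘' y := (x⁻¹ ∘ y⁻¹)⁻¹, where inverses are taken in (B,·). Then (B,·,∘') is a skew left brace, and the map μ(x) = x⁻¹ is an isomorphism of skew left braces from (B,·ᵒᵖ,∘) to (B,·,∘'), where x ·ᵒᵖ y = y · x. -/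
/-! Inversion is an anti-automorphism of `(B, ·)`, and the brace relation of `(B, ·, ∘)` read in
`(B, ·ᵒᵖ)` is again the brace relation of `∘`. Transporting `(B, ·ᵒᵖ, ∘)` along inversion therefore
gives `(B, ·, ∘')`, whose brace relation is the inverse of the one of `∘` at `(x⁻¹, z⁻¹, y⁻¹)`. -/

def BraceRelation {B : Type*} [Group B] (circ : B → B → B) : Prop :=
  ∀ x y z : B, circ x (y * z) = circ x y * x⁻¹ * circ x z

theorem BraceRelation.inv_conj {B : Type*} [Group B] {circ : B → B → B}
    (h : BraceRelation circ) : BraceRelation fun x y => (circ x⁻¹ y⁻¹)⁻¹ := by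
  intro x y z
  calc (circ x⁻¹ (y * z)⁻¹)⁻¹
      = (circ x⁻¹ z⁻¹ * x⁻¹⁻¹ * circ x⁻¹ y⁻¹)⁻¹ := by rw [mul_inv_rev, h]
    _ = (circ x⁻¹ y⁻¹)⁻¹ * x⁻¹ * (circ x⁻¹ z⁻¹)⁻¹ := by simp only [mul_inv_rev, inv_inv, mul_assoc]

theorem circ_opposite_brace_general {B : Type*} [Group B]
    (circ : B → B → B)
    (hbrace : ∀ x y z : B, circ x (y * z) = circ x y * x⁻¹ * circ x z)
    (circ' : B → B → B) (hcirc' : ∀ x y : B, circ' x y = (circ x⁻¹ y⁻¹)⁻¹)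
    (μ : B → B) (hμ : ∀ x : B, μ x = x⁻¹) :
    (∀ x y z : B, circ' x (y * z) = circ' x y * x⁻¹ * circ' x z) ∧
    Function.Bijective μ ∧
    (∀ x y : B, μ (y * x) = μ x * μ y) ∧
    (∀ x y : B, μ (circ x y) = circ' (μ x) (μ y)) := by
  obtain rfl : circ' = fun x y => (circ x⁻¹ y⁻¹)⁻¹ := funext₂ hcirc'
  obtain rfl : μ = Inv.inv := funext hμ
  exact ⟨BraceRelation.inv_conj hbrace, inv_involutive.bijective, fun x y => mul_inv_rev y x,
    fun x y => by simp only [inv_inv]⟩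

/-- Let `(B, ·, ∘)` be a skew left brace and define `x ∘' y := (x⁻¹ ∘ y⁻¹)⁻¹` (inverses in
`(B, ·)`). Then `(B, ·, ∘')` is a skew left brace (its brace relation holds), and the map
`μ(x) = x⁻¹` is an isomorphism of skew left braces from `(B, ·ᵒᵖ, ∘)` to `(B, ·, ∘')`:
it is a bijection with `μ(x ·ᵒᵖ y) = μ(x) · μ(y)` and `μ(x ∘ y) = μ(x) ∘' μ(y)`. -/
theorem circ_opposite_brace {B : Type*} [Group B]
    (circ : B → B → B) (e : B) (cinv : B → B)
    (hassoc : ∀ x y z : B, circ (circ x y) z = circ x (circ y z))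
    (he_left : ∀ x : B, circ e x = x) (he_right : ∀ x : B, circ x e = x)
    (hinv_left : ∀ x : B, circ (cinv x) x = e)
    (hinv_right : ∀ x : B, circ x (cinv x) = e)
    (hbrace : ∀ x y z : B, circ x (y * z) = circ x y * x⁻¹ * circ x z)
    (circ' : B → B → B) (hcirc' : ∀ x y : B, circ' x y = (circ x⁻¹ y⁻¹)⁻¹)
    (μ : B → B) (hμ : ∀ x : B, μ x = x⁻¹) :
    (∀ x y z : B, circ' x (y * z) = circ' x y * x⁻¹ * circ' x z) ∧
    Function.Bijective μ ∧
    (∀ x y : B, μ (y * x) = μ x * μ y) ∧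
    (∀ x y : B, μ (circ x y) = circ' (μ x) (μ y)) :=
  circ_opposite_brace_general circ hbrace circ' hcirc' μ hμ
end

section
/- Let G be a finite group and ψ an abelian fixed-point-free endomorphism of G. Then the map α_ψ : G → Perm(G) defined by α_ψ(σ) = λ(σ)ρ(ψ(σ)) is an injective group homomorphism whose image acts freely on G (i.e., α_ψ(σ)(τ) = τ for some τ implies σ = 1). -/
/-- The left regular representation `λ(g)(x) = gx`. -/
noncomputable def lam {G : Type*} [Group G] (g : G) : Equiv.Perm G := Equiv.mulLeft g

/-- The right regular representation `ρ(g)(x) = xg⁻¹`. -/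
noncomputable def rho {G : Type*} [Group G] (g : G) : Equiv.Perm G := Equiv.mulRight g⁻¹

/-!
Since `λ` and `ρ` are commuting homomorphisms, `σ ↦ λ(σ)ρ(ψ σ)` is a homomorphism for every
endomorphism `ψ`. If `σ τ ψ(σ)⁻¹ = τ`, then `ψ σ = τ⁻¹ σ τ`; an abelian `ψ` is invariant under
conjugation, so `ψ (ψ σ) = ψ σ`, whence `ψ σ = 1` by fixed-point-freeness and then `σ = 1`.
Injectivity follows from freeness at `τ = 1`.
-/

section LamRho

variable {G : Type*} [Group G]

theorem lam_mul_rho_apply (g h x : G) : (lam g * rho h) x = g * x * h⁻¹ := by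
  simp [lam, rho, mul_assoc]

noncomputable def lamMulRhoHom (ψ : G →* G) : G →* Equiv.Perm G where
  toFun σ := lam σ * rho (ψ σ)
  map_one' := by ext x; simp [lam_mul_rho_apply]
  map_mul' σ τ := by
    ext x
    change (lam (σ * τ) * rho (ψ (σ * τ))) x = (lam σ * rho (ψ σ)) ((lam τ * rho (ψ τ)) x)
    simp only [lam_mul_rho_apply, map_mul]
    group

theorem lamMulRhoHom_apply (ψ : G →* G) (σ x : G) : lamMulRhoHom ψ σ x = σ * x * (ψ σ)⁻¹ :=
  lam_mul_rho_apply σ (ψ σ) x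

variable {ψ : G →* G}

theorem map_conj_eq_of_map_mul_comm (habelian : ∀ σ τ : G, ψ (σ * τ) = ψ (τ * σ)) (σ τ : G) :
    ψ (τ⁻¹ * σ * τ) = ψ σ := by
  rw [mul_assoc, habelian, mul_inv_cancel_right]

theorem eq_one_of_lamMulRhoHom_apply_eq (habelian : ∀ σ τ : G, ψ (σ * τ) = ψ (τ * σ))
    (hfpf : ∀ σ : G, ψ σ = σ → σ = 1) {σ τ : G} (h : lamMulRhoHom ψ σ τ = τ) : σ = 1 := by
  rw [lamMulRhoHom_apply, mul_inv_eq_iff_eq_mul] at h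
  have hconj : ψ σ = τ⁻¹ * σ * τ := by rw [mul_assoc, h]; group
  have hψ : ψ σ = 1 := hfpf _ (by rw [hconj, map_conj_eq_of_map_mul_comm habelian, hconj])
  rwa [hψ, mul_one, mul_eq_right] at h

theorem lamMulRhoHom_injective (habelian : ∀ σ τ : G, ψ (σ * τ) = ψ (τ * σ))
    (hfpf : ∀ σ : G, ψ σ = σ → σ = 1) : Function.Injective (lamMulRhoHom ψ) :=
  (injective_iff_map_eq_one _).mpr fun σ h =>
    eq_one_of_lamMulRhoHom_apply_eq habelian hfpf (τ := 1) (by rw [h]; rfl)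

end LamRho

theorem alpha_psi_injective_hom_free_general {G : Type*} [Group G]
    (ψ : G →* G)
    (habelian : ∀ σ τ : G, ψ (σ * τ) = ψ (τ * σ))
    (hfpf : ∀ σ : G, ψ σ = σ → σ = 1)
    (α : G → Equiv.Perm G) (hα : ∀ σ : G, α σ = lam σ * rho (ψ σ)) :
    (∀ σ τ : G, α (σ * τ) = α σ * α τ) ∧
    Function.Injective α ∧
    (∀ σ τ : G, α σ τ = τ → σ = 1) := by
  obtain rfl : α = lamMulRhoHom ψ := funext hα
  exact ⟨map_mul _, lamMulRhoHom_injective habelian hfpf,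
    fun _ _ => eq_one_of_lamMulRhoHom_apply_eq habelian hfpf⟩

/-- For an abelian fixed-point-free endomorphism `ψ` of a finite group `G`, the map
`α_ψ(σ) = λ(σ)ρ(ψ(σ))` is an injective homomorphism `G → Perm G` whose image acts
freely on `G`. -/
theorem alpha_psi_injective_hom_free {G : Type*} [Group G] [Finite G]
    (ψ : G →* G)
    (habelian : ∀ σ τ : G, ψ (σ * τ) = ψ (τ * σ))
    (hfpf : ∀ σ : G, ψ σ = σ → σ = 1)
    (α : G → Equiv.Perm G) (hα : ∀ σ : G, α σ = lam σ * rho (ψ σ)) :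
    (∀ σ τ : G, α (σ * τ) = α σ * α τ) ∧
    Function.Injective α ∧
    (∀ σ τ : G, α σ τ = τ → σ = 1) :=
  alpha_psi_injective_hom_free_general ψ habelian hfpf α hα
end

section
/- Let G be a finite group and ψ an abelian endomorphism of G. Then the image N_ψ of α_ψ is G-stable: λ(g) α_ψ(σ) λ(g)⁻¹ ∈ N_ψ for all g, σ ∈ G. More precisely, λ(g) α_ψ(σ) λ(g)⁻¹ = α_ψ(gσg⁻¹). -/
theorem apply_conj_eq_of_apply_mul_comm {G X : Type*} [Group G] {f : G → X}
    (hf : ∀ σ τ : G, f (σ * τ) = f (τ * σ)) (g σ : G) : f (g * σ * g⁻¹) = f σ := by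
  rw [hf (g * σ) g⁻¹, inv_mul_cancel_left]

section RegularRepresentation

variable {G : Type*} [Group G]

theorem lam_mul (g h : G) : lam (g * h) = lam g * lam h :=
  Equiv.ext fun x => mul_assoc g h x

theorem lam_inv (g : G) : lam g⁻¹ = (lam g)⁻¹ :=
  (Equiv.mulLeft_symm g).symm

theorem commute_lam_rho (g h : G) : Commute (lam g) (rho h) :=
  Equiv.ext fun x => (mul_assoc g x h⁻¹).symm

theorem lam_conj_mul_rho (g σ τ : G) :
    lam g * (lam σ * rho τ) * (lam g)⁻¹ = lam (g * σ * g⁻¹) * rho τ := by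
  rw [mul_assoc, mul_assoc, ← (commute_lam_rho g τ).inv_left.eq, lam_mul, lam_mul, lam_inv]
  simp only [mul_assoc]

end RegularRepresentation

theorem alpha_psi_G_stable_general {G : Type*} [Group G]
    (ψ : G →* G)
    (habelian : ∀ σ τ : G, ψ (σ * τ) = ψ (τ * σ))
    (α : G → Equiv.Perm G) (hα : ∀ σ : G, α σ = lam σ * rho (ψ σ)) :
    (∀ g σ : G, lam g * α σ * (lam g)⁻¹ = α (g * σ * g⁻¹)) ∧
    (∀ g σ : G, lam g * α σ * (lam g)⁻¹ ∈ Set.range α) := by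
  have conj_alpha (g σ : G) : lam g * α σ * (lam g)⁻¹ = α (g * σ * g⁻¹) := by
    rw [hα, hα, lam_conj_mul_rho, apply_conj_eq_of_apply_mul_comm habelian]
  exact ⟨conj_alpha, fun g σ => ⟨g * σ * g⁻¹, (conj_alpha g σ).symm⟩⟩

/-- For an abelian endomorphism `ψ` of a finite group `G`, the image `N_ψ` of
`α_ψ(σ) = λ(σ)ρ(ψ(σ))` is `G`-stable; more precisely
`λ(g) α_ψ(σ) λ(g)⁻¹ = α_ψ(gσg⁻¹)` for all `g, σ ∈ G`. -/
theorem alpha_psi_G_stable {G : Type*} [Group G] [Finite G]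
    (ψ : G →* G)
    (habelian : ∀ σ τ : G, ψ (σ * τ) = ψ (τ * σ))
    (α : G → Equiv.Perm G) (hα : ∀ σ : G, α σ = lam σ * rho (ψ σ)) :
    (∀ g σ : G, lam g * α σ * (lam g)⁻¹ = α (g * σ * g⁻¹)) ∧
    (∀ g σ : G, lam g * α σ * (lam g)⁻¹ ∈ Set.range α) :=
  alpha_psi_G_stable_general ψ habelian α hα
end

section
/- Let G be a group with presentation ⟨σ, τ | σ^p = τ^q = 1, τστ⁻¹ = σ^g⟩ where p > q are primes, p ≡ 1 (mod q), and g has multiplicative order q modulo p. Define, for 0 ≤ s ≤ p−1 and 2 ≤ t ≤ q−1, the endomorphism ψ_{s,t} of G by ψ_{s,t}(σ) = 1 and ψ_{s,t}(τ) = σ^s τ^t. Then each ψ_{s,t} is an abelian fixed-point-free endomorphism of G. -/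
/-!
Since `ψ σ = 1` and `σ, τ` generate `G`, the image of `ψ` lies in the cyclic group generated by
`y = ψ τ = σ ^ s * τ ^ t`, which makes `ψ` abelian; moreover `ψ y = y ^ t`, so `ψ` acts as
`x ↦ x ^ t` on its image. A fixed point `x` therefore satisfies `x ^ (t - 1) = 1`, and as
`0 < t - 1 < q < p`, the exponent `t - 1` is coprime to `|G| = p q`, forcing `x = 1`.
-/

open Subgroup

namespace MonoidHom

variable {G H : Type*} [Group G] [Group H]

theorem range_le_zpowers_of_closure_pair_eq_top (f : G →* H) {a b : G}
    (hab : closure ({a, b} : Set G) = ⊤) (ha : f a = 1) : f.range ≤ zpowers (f b) := by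
  rw [range_eq_map, ← hab, map_closure, Set.image_pair, ha, closure_le]
  rintro _ (rfl | rfl)
  · exact one_mem _
  · exact mem_zpowers _

theorem map_mul_comm_of_range_le_zpowers (f : G →* H) {y : H} (hf : f.range ≤ zpowers y)
    (x z : G) : f (x * z) = f (z * x) := by
  obtain ⟨m, hm⟩ := hf (f.mem_range.2 ⟨x, rfl⟩)
  obtain ⟨n, hn⟩ := hf (f.mem_range.2 ⟨z, rfl⟩)
  rw [map_mul, map_mul, ← hm, ← hn, ← zpow_add, ← zpow_add, add_comm]

theorem map_eq_pow_of_mem_zpowers (f : G →* G) {y x : G} {n : ℕ} (hy : f y = y ^ n)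
    (hx : x ∈ zpowers y) : f x = x ^ n := by
  obtain ⟨k, rfl⟩ := hx
  rw [map_zpow, hy, ← zpow_natCast, ← zpow_mul, mul_comm, zpow_mul, zpow_natCast]

theorem eq_one_of_map_eq_self (f : G →* G) {y : G} {n : ℕ} (hf : f.range ≤ zpowers y)
    (hy : f y = y ^ (n + 1)) (hn : (Nat.card G).Coprime n) {x : G} (hx : f x = x) : x = 1 := by
  have hx_pow : x ^ (n + 1) = x := by
    rw [← map_eq_pow_of_mem_zpowers f hy (hf (f.mem_range.2 ⟨x, hx⟩)), hx]
  have hx_pow_one : x ^ n = 1 ^ n := by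
    rwa [one_pow, ← mul_eq_right, ← pow_succ]
  exact hn.pow_left_bijective.injective hx_pow_one

end MonoidHom

theorem Nat.coprime_mul_primes_of_pos_of_lt {p q n : ℕ} (hp : p.Prime) (hq : q.Prime)
    (hn : 0 < n) (hnp : n < p) (hnq : n < q) : (p * q).Coprime n :=
  Nat.Coprime.mul_left ((hp.coprime_iff_not_dvd).2 (Nat.not_dvd_of_pos_of_lt hn hnp))
    ((hq.coprime_iff_not_dvd).2 (Nat.not_dvd_of_pos_of_lt hn hnq))

theorem psi_st_abelian_fpf_general {G : Type*} [Group G]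
    (p q : ℕ) (hp : p.Prime) (hq : q.Prime) (hlt : q < p)
    (σ τ : G)
    (hcard : Nat.card G = p * q)
    (hgen : Subgroup.closure ({σ, τ} : Set G) = ⊤)
    (s t : ℕ) (ht2 : 2 ≤ t) (htq : t ≤ q - 1)
    (ψ : G →* G) (hψσ : ψ σ = 1) (hψτ : ψ τ = σ ^ s * τ ^ t) :
    (∀ x y : G, ψ (x * y) = ψ (y * x)) ∧ (∀ x : G, ψ x = x → x = 1) := by
  have hrange := ψ.range_le_zpowers_of_closure_pair_eq_top hgen hψσ
  refine ⟨ψ.map_mul_comm_of_range_le_zpowers hrange, fun x hx => ?_⟩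
  have hψy : ψ (ψ τ) = ψ τ ^ (t - 1 + 1) := by
    rw [Nat.sub_add_cancel (by omega), hψτ, map_mul, map_pow, map_pow, hψσ, one_pow, one_mul, hψτ]
  have hcop : (Nat.card G).Coprime (t - 1) :=
    hcard ▸ Nat.coprime_mul_primes_of_pos_of_lt hp hq (by omega) (by omega) (by omega)
  exact ψ.eq_one_of_map_eq_self hrange hψy hcop hx

/-- Let `G = ⟨σ, τ | σ^p = τ^q = 1, τστ⁻¹ = σ^g⟩` be the nonabelian group of order `pq`,
where `p > q` are primes, `p ≡ 1 (mod q)`, and `g` has multiplicative order `q` mod `p`.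
For `0 ≤ s ≤ p-1` and `2 ≤ t ≤ q-1`, the endomorphism `ψ_{s,t}` of `G` determined by
`ψ_{s,t}(σ) = 1` and `ψ_{s,t}(τ) = σ^s τ^t` is abelian and fixed-point-free. -/
theorem psi_st_abelian_fpf {G : Type*} [Group G]
    (p q : ℕ) (hp : p.Prime) (hq : q.Prime) (hlt : q < p) (hmod : p % q = 1)
    (g : ℕ) (hg : orderOf ((g : ZMod p)) = q)
    (σ τ : G)
    (hcard : Nat.card G = p * q)
    (hσ : orderOf σ = p) (hτ : orderOf τ = q)
    (hrel : τ * σ * τ⁻¹ = σ ^ g)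
    (hgen : Subgroup.closure ({σ, τ} : Set G) = ⊤)
    (s t : ℕ) (hs : s ≤ p - 1) (ht2 : 2 ≤ t) (htq : t ≤ q - 1)
    (ψ : G →* G) (hψσ : ψ σ = 1) (hψτ : ψ τ = σ ^ s * τ ^ t) :
    (∀ x y : G, ψ (x * y) = ψ (y * x)) ∧ (∀ x : G, ψ x = x → x = 1) :=
  psi_st_abelian_fpf_general p q hp hq hlt σ τ hcard hgen s t ht2 htq ψ hψσ hψτ
end

section
/- Let B be the set of pairs (i,j) with i ∈ ℤ/p and j ∈ ℤ/q, where p > q are primes with p ≡ 1 (mod q), and let g be an integer of multiplicative order q modulo p. Define (i,j)·(k,ℓ) = (i + k g^j, j+ℓ) and (i,j)∘(k,ℓ) = (i+k, j+ℓ). Then (B,·,∘) is a skew left brace whose dot group is nonabelian of order pq and whose circle group is cyclic of order pq. -/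
/-!
The dot group is the semidirect product `ℤ/p ⋊ ℤ/q` in which `j` acts by multiplication by
`g ^ j`; all that is needed is that `j ↦ g ^ j` is an additive character `ℤ/q → ℤ/p`, which holds
because `g ^ q = 1`. The circle operation is componentwise addition, and the brace relation reduces
to `g ^ (-i) * g ^ (i + j) = g ^ j`. The twist is nontrivial because `g ≠ 1`, and `ℤ/p × ℤ/q` is
cyclic, generated by `(1, 1)`, by the Chinese remainder theorem.
-/

namespace AddChar

variable {R J : Type*} [CommRing R] [AddCommGroup J] (ψ : AddChar J R)

def twistedMul (x y : R × J) : R × J := (x.1 + y.1 * ψ x.2, x.2 + y.2)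

def twistedInv (x : R × J) : R × J := (-x.1 * ψ (-x.2), -x.2)

theorem twistedMul_assoc (a b c : R × J) :
    twistedMul ψ (twistedMul ψ a b) c = twistedMul ψ a (twistedMul ψ b c) := by
  refine Prod.ext ?_ (add_assoc ..)
  simp only [twistedMul, map_add_eq_mul]
  ring

theorem zero_twistedMul (a : R × J) : twistedMul ψ 0 a = a := by
  simp [twistedMul]

theorem twistedMul_zero (a : R × J) : twistedMul ψ a 0 = a := by
  simp [twistedMul]

theorem twistedMul_twistedInv (a : R × J) : twistedMul ψ a (twistedInv ψ a) = 0 := by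
  simp [twistedMul, twistedInv, mul_assoc, ← map_add_eq_mul]

theorem twistedInv_twistedMul (a : R × J) : twistedMul ψ (twistedInv ψ a) a = 0 := by
  simp [twistedMul, twistedInv]

theorem add_twistedMul (x y z : R × J) :
    x + twistedMul ψ y z = twistedMul ψ (twistedMul ψ (x + y) (twistedInv ψ x)) (x + z) := by
  have hconj : ψ (x.2 + y.2 + -x.2) = ψ y.2 := by congr 1; abel
  have hcancel : ψ (-x.2) * ψ (x.2 + y.2) = ψ y.2 := by
    rw [← map_add_eq_mul, neg_add_cancel_left]
  refine Prod.ext ?_ ?_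
  · simp only [twistedMul, twistedInv, Prod.fst_add, Prod.snd_add, hconj]
    linear_combination x.1 * hcancel
  · simp only [twistedMul, twistedInv, Prod.snd_add]
    abel

theorem twistedMul_ne_of_ne_one {j : J} (hj : ψ j ≠ 1) :
    twistedMul ψ (0, j) (1, 0) ≠ twistedMul ψ (1, 0) (0, j) := by
  simpa [twistedMul] using hj

end AddChar

theorem ZMod.exists_natCast_eq_of_coprime {m n : ℕ} [NeZero m] [NeZero n] (h : m.Coprime n)
    (y : ZMod m × ZMod n) : ∃ k : ℕ, (k : ZMod m × ZMod n) = y := by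
  have : NeZero (m * n) := ⟨mul_ne_zero (NeZero.ne m) (NeZero.ne n)⟩
  refine ⟨((ZMod.chineseRemainder h).symm y).val, ?_⟩
  rw [← map_natCast (ZMod.chineseRemainder h), ZMod.natCast_zmod_val, RingEquiv.apply_symm_apply]

theorem brace_metacyclic_dot_cyclic_circ_general
    (p q : ℕ) (hp : p.Prime) (hq : q.Prime) (hlt : q < p)
    (g : ℕ) (hg : orderOf ((g : ZMod p)) = q) :
    letI B := ZMod p × ZMod q
    letI gp : ZMod q → ZMod p := fun j => (g : ZMod p) ^ j.val
    letI dot : B → B → B := fun x y => (x.1 + y.1 * gp x.2, x.2 + y.2)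
    letI circ : B → B → B := fun x y => (x.1 + y.1, x.2 + y.2)
    letI dinv : B → B := fun x => (-x.1 * gp (-x.2), -x.2)
    -- `(B, ·)` is a group
    (∀ a b c : B, dot (dot a b) c = dot a (dot b c)) ∧
    (∀ a : B, dot ((0, 0) : B) a = a) ∧ (∀ a : B, dot a ((0, 0) : B) = a) ∧
    (∀ a : B, dot a (dinv a) = ((0, 0) : B)) ∧
    (∀ a : B, dot (dinv a) a = ((0, 0) : B)) ∧
    -- `(B, ∘)` is a group
    (∀ a b c : B, circ (circ a b) c = circ a (circ b c)) ∧
    (∀ a : B, circ ((0, 0) : B) a = a) ∧ (∀ a : B, circ a ((0, 0) : B) = a) ∧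
    (∀ a : B, circ a (-a.1, -a.2) = ((0, 0) : B)) ∧
    (∀ a : B, circ (-a.1, -a.2) a = ((0, 0) : B)) ∧
    -- the brace relation
    (∀ x y z : B, circ x (dot y z) = dot (dot (circ x y) (dinv x)) (circ x z)) ∧
    -- both groups have order `pq`
    Nat.card B = p * q ∧
    -- the dot group is nonabelian
    (∃ x y : B, dot x y ≠ dot y x) ∧
    -- the circle group is cyclic
    (∃ x : B, ∀ y : B, ∃ n : ℕ, y = (fun b => circ x b)^[n] ((0, 0) : B)) := by
  have : NeZero p := ⟨hp.ne_zero⟩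
  have : NeZero q := ⟨hq.ne_zero⟩
  let ψ := AddChar.zmodChar q (hg ▸ pow_orderOf_eq_one (g : ZMod p))
  have hψ : ψ 1 ≠ 1 := by
    rw [← Nat.cast_one, AddChar.zmodChar_apply', pow_one, Ne, ← orderOf_eq_one_iff, hg]
    exact hq.ne_one
  have hcop : p.Coprime q := (Nat.coprime_primes hp hq).mpr hlt.ne'
  -- `zmodChar` is definitionally `j ↦ g ^ j.val`, so `dot` is `twistedMul ψ` and `circ` is `+`.
  refine ⟨ψ.twistedMul_assoc, ψ.zero_twistedMul, ψ.twistedMul_zero, ψ.twistedMul_twistedInv,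
    ψ.twistedInv_twistedMul, add_assoc, zero_add, add_zero, add_neg_cancel, neg_add_cancel,
    ψ.add_twistedMul, by rw [Nat.card_prod, Nat.card_zmod, Nat.card_zmod],
    ⟨_, _, ψ.twistedMul_ne_of_ne_one hψ⟩, ⟨1, fun y => ?_⟩⟩
  obtain ⟨n, rfl⟩ := ZMod.exists_natCast_eq_of_coprime hcop y
  refine ⟨n, ?_⟩
  change _ = ((1 : ZMod p × ZMod q) + ·)^[n] 0
  rw [add_left_iterate_apply_zero, nsmul_one]

/-- Let `B = ℤ/p × ℤ/q` with `p > q` primes, `p ≡ 1 (mod q)`, and `g` of multiplicative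
order `q` mod `p`. With `(i,j)·(k,ℓ) = (i + k g^j, j+ℓ)` and `(i,j)∘(k,ℓ) = (i+k, j+ℓ)`,
the triple `(B, ·, ∘)` is a skew left brace whose dot group is nonabelian of order `pq`
and whose circle group is cyclic of order `pq`. -/
theorem brace_metacyclic_dot_cyclic_circ
    (p q : ℕ) (hp : p.Prime) (hq : q.Prime) (hlt : q < p) (hmod : p % q = 1)
    (g : ℕ) (hg : orderOf ((g : ZMod p)) = q) :
    letI B := ZMod p × ZMod q
    letI gp : ZMod q → ZMod p := fun j => (g : ZMod p) ^ j.val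
    letI dot : B → B → B := fun x y => (x.1 + y.1 * gp x.2, x.2 + y.2)
    letI circ : B → B → B := fun x y => (x.1 + y.1, x.2 + y.2)
    letI dinv : B → B := fun x => (-x.1 * gp (-x.2), -x.2)
    -- `(B, ·)` is a group
    (∀ a b c : B, dot (dot a b) c = dot a (dot b c)) ∧
    (∀ a : B, dot ((0, 0) : B) a = a) ∧ (∀ a : B, dot a ((0, 0) : B) = a) ∧
    (∀ a : B, dot a (dinv a) = ((0, 0) : B)) ∧
    (∀ a : B, dot (dinv a) a = ((0, 0) : B)) ∧
    -- `(B, ∘)` is a group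
    (∀ a b c : B, circ (circ a b) c = circ a (circ b c)) ∧
    (∀ a : B, circ ((0, 0) : B) a = a) ∧ (∀ a : B, circ a ((0, 0) : B) = a) ∧
    (∀ a : B, circ a (-a.1, -a.2) = ((0, 0) : B)) ∧
    (∀ a : B, circ (-a.1, -a.2) a = ((0, 0) : B)) ∧
    -- the brace relation
    (∀ x y z : B, circ x (dot y z) = dot (dot (circ x y) (dinv x)) (circ x z)) ∧
    -- both groups have order `pq`
    Nat.card B = p * q ∧
    -- the dot group is nonabelian
    (∃ x y : B, dot x y ≠ dot y x) ∧
    -- the circle group is cyclic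
    (∃ x : B, ∀ y : B, ∃ n : ℕ, y = (fun b => circ x b)^[n] ((0, 0) : B)) :=
  brace_metacyclic_dot_cyclic_circ_general p q hp hq hlt g hg
end

section
/- Let B be the set of pairs (i,j) with i ∈ ℤ/p and j ∈ ℤ/q, where p > q are primes with p ≡ 1 (mod q), g an integer of multiplicative order q modulo p, and fix t with 2 ≤ t ≤ q−1. Define (i,j)·(k,ℓ) = (i + k g^j, j+ℓ) and (i,j)∘(k,ℓ) = (i + k g^{j(1−t)}, j+ℓ). Then (B,·,∘) is a skew left brace, and both (B,·) and (B,∘) are nonabelian groups of order pq. -/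
/-!
Both operations are multiplications of a semidirect product `ℤ/p ⋊_φ ℤ/q`: the dot for
`φ j = g ^ j` and the circle for `ψ j = g ^ ((1 - t) j)`, and since `g` has order `q`, both twists
are homomorphisms `ℤ/q → (ℤ/p)ˣ`. The brace relation needs only `φ` to be a homomorphism: expanding
both sides, `ψ` only enters through the common factor `ψ x₂`, and the dot terms cancel by
`φ (-x₂) φ (x₂ + y₂) = φ y₂`. A semidirect product is nonabelian as soon as its twist is nontrivial,
which for `ψ` amounts to `t ≢ 1 (mod q)`.
-/

section PowVal

variable {M : Type*} [Monoid M] {x : M} {n : ℕ} [NeZero n]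

theorem pow_zmod_val_add (hx : x ^ n = 1) (a b : ZMod n) :
    x ^ (a + b).val = x ^ a.val * x ^ b.val := by
  rw [← pow_add, ZMod.val_add]
  conv_rhs => rw [← Nat.mod_add_div (a.val + b.val) n, pow_add, pow_mul, hx, one_pow, mul_one]

theorem pow_zmod_val_eq_one_iff (hx : orderOf x = n) (a : ZMod n) : x ^ a.val = 1 ↔ a = 0 := by
  rw [← orderOf_dvd_iff_pow_eq_one, hx, ← ZMod.natCast_eq_zero_iff, ZMod.natCast_zmod_val]

end PowVal

section SemidirectMul

variable {R A : Type*} [CommRing R] [AddCommGroup A] (φ : A → R)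

/-- The multiplication of `R ⋊_φ A`, with `R` written additively and `A` acting through `φ`. -/
def semidirectMul (x y : R × A) : R × A := (x.1 + y.1 * φ x.2, x.2 + y.2)

def semidirectInv (x : R × A) : R × A := (-x.1 * φ (-x.2), -x.2)

variable {φ}

theorem semidirectMul_assoc (hφ : ∀ a b, φ (a + b) = φ a * φ b) (x y z : R × A) :
    semidirectMul φ (semidirectMul φ x y) z = semidirectMul φ x (semidirectMul φ y z) := by
  simp only [semidirectMul, hφ, Prod.mk.injEq]
  exact ⟨by ring, add_assoc _ _ _⟩

theorem zero_semidirectMul (hφ : φ 0 = 1) (x : R × A) : semidirectMul φ (0, 0) x = x := by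
  simp [semidirectMul, hφ]

theorem semidirectMul_zero (x : R × A) : semidirectMul φ x (0, 0) = x := by
  simp [semidirectMul]

theorem semidirectMul_semidirectInv (hφ : ∀ a b, φ (a + b) = φ a * φ b) (hφ₀ : φ 0 = 1)
    (x : R × A) : semidirectMul φ x (semidirectInv φ x) = (0, 0) := by
  have h : φ (-x.2) * φ x.2 = 1 := by rw [← hφ, neg_add_cancel, hφ₀]
  simp only [semidirectMul, semidirectInv, Prod.mk.injEq, add_neg_cancel, and_true]
  linear_combination -x.1 * h

theorem semidirectInv_semidirectMul (x : R × A) :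
    semidirectMul φ (semidirectInv φ x) x = (0, 0) := by
  simp only [semidirectMul, semidirectInv, Prod.mk.injEq, neg_add_cancel, and_true]
  ring

theorem semidirectMul_brace (hφ : ∀ a b, φ (a + b) = φ a * φ b) (ψ : A → R) (x y z : R × A) :
    semidirectMul ψ x (semidirectMul φ y z) =
      semidirectMul φ (semidirectMul φ (semidirectMul ψ x y) (semidirectInv φ x))
        (semidirectMul ψ x z) := by
  have h : φ (-x.2) * φ (x.2 + y.2) = φ y.2 := by rw [← hφ, neg_add_cancel_left]
  simp only [semidirectMul, semidirectInv, Prod.mk.injEq, add_neg_cancel_comm]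
  exact ⟨by linear_combination x.1 * h, by abel⟩

theorem exists_semidirectMul_ne_of_ne_one {a : A} (ha : φ a ≠ 1) :
    ∃ x y : R × A, semidirectMul φ x y ≠ semidirectMul φ y x :=
  ⟨(0, a), (1, 0), by simpa [semidirectMul] using ha⟩

end SemidirectMul

theorem brace_metacyclic_dot_metacyclic_circ_general
    (p q : ℕ) (g : ℕ) (hg : orderOf ((g : ZMod p)) = q)
    (t : ℕ) (ht2 : 2 ≤ t) (htq : t ≤ q - 1) :
    letI B := ZMod p × ZMod q
    letI gp : ZMod q → ZMod p := fun j => (g : ZMod p) ^ j.val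
    letI dot : B → B → B := fun x y => (x.1 + y.1 * gp x.2, x.2 + y.2)
    letI circ : B → B → B := fun x y => (x.1 + y.1 * gp ((1 - (t : ZMod q)) * x.2), x.2 + y.2)
    letI dinv : B → B := fun x => (-x.1 * gp (-x.2), -x.2)
    letI cinv : B → B := fun x => (-x.1 * gp ((1 - (t : ZMod q)) * (-x.2)), -x.2)
    -- `(B, ·)` is a group
    (∀ a b c : B, dot (dot a b) c = dot a (dot b c)) ∧
    (∀ a : B, dot ((0, 0) : B) a = a) ∧ (∀ a : B, dot a ((0, 0) : B) = a) ∧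
    (∀ a : B, dot a (dinv a) = ((0, 0) : B)) ∧
    (∀ a : B, dot (dinv a) a = ((0, 0) : B)) ∧
    -- `(B, ∘)` is a group
    (∀ a b c : B, circ (circ a b) c = circ a (circ b c)) ∧
    (∀ a : B, circ ((0, 0) : B) a = a) ∧ (∀ a : B, circ a ((0, 0) : B) = a) ∧
    (∀ a : B, circ a (cinv a) = ((0, 0) : B)) ∧
    (∀ a : B, circ (cinv a) a = ((0, 0) : B)) ∧
    -- the brace relation
    (∀ x y z : B, circ x (dot y z) = dot (dot (circ x y) (dinv x)) (circ x z)) ∧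
    -- both groups have order `pq`
    Nat.card B = p * q ∧
    -- the dot group is nonabelian
    (∃ x y : B, dot x y ≠ dot y x) ∧
    -- the circle group is nonabelian
    (∃ x y : B, circ x y ≠ circ y x) := by
  set φ : ZMod q → ZMod p := fun j => (g : ZMod p) ^ j.val
  have : Fact (1 < q) := ⟨by omega⟩
  have hφ : ∀ a b, φ (a + b) = φ a * φ b := pow_zmod_val_add (hg ▸ pow_orderOf_eq_one _)
  have hφ₀ : φ 0 = 1 := by simp [φ]
  set c : ZMod q := 1 - (t : ZMod q)
  set ψ : ZMod q → ZMod p := fun j => φ (c * j)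
  have hψ : ∀ a b, ψ (a + b) = ψ a * ψ b := fun a b => by simp only [ψ, mul_add, hφ]
  have hψ₀ : ψ 0 = 1 := by simp only [ψ, mul_zero, hφ₀]
  have hc : c ≠ 0 := by
    rw [sub_ne_zero, ne_comm, ← Nat.cast_one, Ne, ZMod.natCast_eq_natCast_iff',
      Nat.mod_eq_of_lt (by omega : t < q), Nat.mod_eq_of_lt (by omega : 1 < q)]
    omega
  refine ⟨semidirectMul_assoc hφ, zero_semidirectMul hφ₀, semidirectMul_zero,
    semidirectMul_semidirectInv hφ hφ₀, semidirectInv_semidirectMul,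
    semidirectMul_assoc hψ, zero_semidirectMul hψ₀, semidirectMul_zero (φ := ψ),
    semidirectMul_semidirectInv hψ hψ₀, semidirectInv_semidirectMul (φ := ψ),
    semidirectMul_brace hφ ψ, by rw [Nat.card_prod, Nat.card_zmod, Nat.card_zmod],
    exists_semidirectMul_ne_of_ne_one (a := 1) ?_,
    exists_semidirectMul_ne_of_ne_one (φ := ψ) (a := 1) ?_⟩
  · exact (pow_zmod_val_eq_one_iff hg 1).not.mpr one_ne_zero
  · simpa only [ψ, mul_one] using (pow_zmod_val_eq_one_iff hg c).not.mpr hc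

/-- Let `B = ℤ/p × ℤ/q` with `p > q` primes, `p ≡ 1 (mod q)`, `g` of multiplicative order
`q` mod `p`, and `2 ≤ t ≤ q-1`. With `(i,j)·(k,ℓ) = (i + k g^j, j+ℓ)` and
`(i,j)∘(k,ℓ) = (i + k g^{j(1-t)}, j+ℓ)`, the triple `(B, ·, ∘)` is a skew left brace, and
both `(B, ·)` and `(B, ∘)` are nonabelian groups of order `pq`. -/
theorem brace_metacyclic_dot_metacyclic_circ
    (p q : ℕ) (hp : p.Prime) (hq : q.Prime) (hlt : q < p) (hmod : p % q = 1)
    (g : ℕ) (hg : orderOf ((g : ZMod p)) = q)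
    (t : ℕ) (ht2 : 2 ≤ t) (htq : t ≤ q - 1) :
    letI B := ZMod p × ZMod q
    letI gp : ZMod q → ZMod p := fun j => (g : ZMod p) ^ j.val
    letI dot : B → B → B := fun x y => (x.1 + y.1 * gp x.2, x.2 + y.2)
    letI circ : B → B → B := fun x y => (x.1 + y.1 * gp ((1 - (t : ZMod q)) * x.2), x.2 + y.2)
    letI dinv : B → B := fun x => (-x.1 * gp (-x.2), -x.2)
    letI cinv : B → B := fun x => (-x.1 * gp ((1 - (t : ZMod q)) * (-x.2)), -x.2)
    -- `(B, ·)` is a group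
    (∀ a b c : B, dot (dot a b) c = dot a (dot b c)) ∧
    (∀ a : B, dot ((0, 0) : B) a = a) ∧ (∀ a : B, dot a ((0, 0) : B) = a) ∧
    (∀ a : B, dot a (dinv a) = ((0, 0) : B)) ∧
    (∀ a : B, dot (dinv a) a = ((0, 0) : B)) ∧
    -- `(B, ∘)` is a group
    (∀ a b c : B, circ (circ a b) c = circ a (circ b c)) ∧
    (∀ a : B, circ ((0, 0) : B) a = a) ∧ (∀ a : B, circ a ((0, 0) : B) = a) ∧
    (∀ a : B, circ a (cinv a) = ((0, 0) : B)) ∧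
    (∀ a : B, circ (cinv a) a = ((0, 0) : B)) ∧
    -- the brace relation
    (∀ x y z : B, circ x (dot y z) = dot (dot (circ x y) (dinv x)) (circ x z)) ∧
    -- both groups have order `pq`
    Nat.card B = p * q ∧
    -- the dot group is nonabelian
    (∃ x y : B, dot x y ≠ dot y x) ∧
    -- the circle group is nonabelian
    (∃ x y : B, circ x y ≠ circ y x) :=
  brace_metacyclic_dot_metacyclic_circ_general p q g hg t ht2 htq
end
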